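/- Let I be a monomial ideal, and let J and K be monomial ideals such that G(I) is the disjoint union of G(J) and G(K). If both J and K have linear minimal free resolutions, then I = J + K is a Betti splitting. -/

import Mathlib

set_option linter.unusedSectionVars false

open MvPolynomial

variable (k : Type*) [Field k] (σ : Type*) [Fintype σ] [DecidableEq σ] [LinearOrder σ]

/-- The Koszul differential on chains `c : Finset σ → R`. -/
noncomputable def koszulD :
    (Finset σ → MvPolynomial σ k) →ₗ[k] (Finset σ → MvPolynomial σ k) where
  toFun c := fun S => ∑ t ∈ Sᶜ,
    (-1 : MvPolynomial σ k) ^ (S.filter (fun s => s < t)).card * (X t * c (insert t S))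
  map_add' c d := by
    funext S
    simp [mul_add, Finset.sum_add_distrib]
  map_smul' a c := by
    funext S
    simp [Finset.smul_sum, mul_smul_comm]

/-- The multidegree-`j` piece of the `i`-th term of the Koszul complex tensored with
the ideal `I`: functions assigning to each `i`-element subset `S` of the variables an
element of `I` that is homogeneous of multidegree `j - deg S`. -/
noncomputable def kChain (I : Ideal (MvPolynomial σ k)) (i : ℕ) (j : σ →₀ ℕ) :
    Submodule k (Finset σ → MvPolynomial σ k) where
  carrier := {c | ∀ S : Finset σ,
    (S.card ≠ i → c S = 0) ∧ c S ∈ I ∧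
    ∀ m ∈ (c S).support, m + ∑ t ∈ S, Finsupp.single t 1 = j}
  zero_mem' := by intro S; simp
  add_mem' := by
    intro c d hc hd S
    refine ⟨fun h => by simp [ (hc S).1 h, (hd S).1 h], I.add_mem (hc S).2.1 (hd S).2.1,
      fun m hm => ?_⟩
    rcases Finset.mem_union.mp (MvPolynomial.support_add hm) with h | h
    · exact (hc S).2.2 m h
    · exact (hd S).2.2 m h
  smul_mem' := by
    intro a c hc S
    refine ⟨fun h => by simp [(hc S).1 h], I.smul_of_tower_mem a (hc S).2.1,
      fun m hm => (hc S).2.2 m (MvPolynomial.support_smul hm)⟩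

/-- Koszul cycles in homological degree `i`, multidegree `j`. -/
noncomputable def koszulCycles (I : Ideal (MvPolynomial σ k)) (i : ℕ) (j : σ →₀ ℕ) :
    Submodule k (Finset σ → MvPolynomial σ k) :=
  kChain k σ I i j ⊓ LinearMap.ker (koszulD k σ)

/-- The multidegree-`j` piece of `Tor_i(k, I)`, computed as Koszul homology. -/
noncomputable abbrev koszulHomology (I : Ideal (MvPolynomial σ k)) (i : ℕ) (j : σ →₀ ℕ) :=
  ↥(koszulCycles k σ I i j) ⧸
    (Submodule.comap (koszulCycles k σ I i j).subtype
      ((kChain k σ I (i + 1) j).map (koszulD k σ)))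

/-- The multigraded Betti number `β_{i,j}(I) = dim_k Tor_i(k,I)_j`. -/
noncomputable def bettiNumber (I : Ideal (MvPolynomial σ k)) (i : ℕ) (j : σ →₀ ℕ) : ℕ :=
  Module.finrank k (koszulHomology k σ I i j)

/-- The graded Betti number `β_{i,d}(I)`, the sum of the multigraded Betti numbers over
all multidegrees of total degree `d`. -/
noncomputable def bettiNumberGr (I : Ideal (MvPolynomial σ k)) (i : ℕ) (d : ℕ) : ℕ :=
  ∑ᶠ j ∈ {j : σ →₀ ℕ | (j.sum fun _ e => e) = d}, bettiNumber k σ I i j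

/-- The total Betti number `β_i(I)`. -/
noncomputable def bettiTotal (I : Ideal (MvPolynomial σ k)) (i : ℕ) : ℕ :=
  ∑ᶠ j : σ →₀ ℕ, bettiNumber k σ I i j

/-- A monomial ideal. -/
def IsMonomialIdeal (I : Ideal (MvPolynomial σ k)) : Prop :=
  ∃ S : Set (σ →₀ ℕ), I = Ideal.span ((fun m => (monomial m (1 : k) : MvPolynomial σ k)) '' S)

/-- The exponent vectors of the unique minimal monomial generating set `G(I)` of a
monomial ideal: monomials of `I` none of whose proper divisors lies in `I`. -/
def minGens (I : Ideal (MvPolynomial σ k)) : Set (σ →₀ ℕ) :=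
  {m | (monomial m (1 : k) : MvPolynomial σ k) ∈ I ∧
    ∀ m' : σ →₀ ℕ, m' ≤ m → m' ≠ m → (monomial m' (1 : k) : MvPolynomial σ k) ∉ I}

/-- A monomial ideal generated in a single degree `d` has a linear resolution if
`β_{i,j} = 0` whenever `j ≠ d + i`. -/
def HasLinearResolution (I : Ideal (MvPolynomial σ k)) : Prop :=
  ∃ d : ℕ, (∀ m ∈ minGens k σ I, (m.sum fun _ e => e) = d) ∧
    ∀ (i j : ℕ), j ≠ d + i → bettiNumberGr k σ I i j = 0

/-- `I = J + K` is a Betti splitting (graded version):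
`β_{i,j}(I) = β_{i,j}(J) + β_{i,j}(K) + β_{i-1,j}(J ∩ K)` for all `i` and degrees `j`. -/
def IsBettiSplittingGr (J K : Ideal (MvPolynomial σ k)) : Prop :=
  ∀ (i j : ℕ),
    bettiNumberGr k σ (J + K) i j =
      bettiNumberGr k σ J i j + bettiNumberGr k σ K i j +
        (if i = 0 then 0 else bettiNumberGr k σ (J ⊓ K) (i - 1) j)

/-- Projective dimension: `pd(I) = max {i : β_{i,j}(I) ≠ 0 for some j}`. -/
noncomputable def projDim (I : Ideal (MvPolynomial σ k)) : ℕ :=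
  sSup {i : ℕ | ∃ j : σ →₀ ℕ, bettiNumber k σ I i j ≠ 0}

/-- Castelnuovo–Mumford regularity: `reg(I) = max {j - i : β_{i,j}(I) ≠ 0}`. -/
noncomputable def regIdeal (I : Ideal (MvPolynomial σ k)) : ℕ :=
  sSup {d : ℕ | ∃ i j : ℕ, bettiNumberGr k σ I i j ≠ 0 ∧ j = d + i}

/-- Castelnuovo–Mumford regularity of the quotient `R/I`, for `I ≠ R`: since
`β_{i+1,j}(R/I) = β_{i,j}(I)` and `β_{0,0}(R/I) = 1`, we have
`reg(R/I) = max {j - (i+1) : β_{i,j}(I) ≠ 0}`. -/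
noncomputable def regQuot (I : Ideal (MvPolynomial σ k)) : ℕ :=
  sSup {d : ℕ | ∃ i j : ℕ, bettiNumberGr k σ I i j ≠ 0 ∧ j = d + i + 1}

/-!
Fix a multidegree `j`. In degree `j` the Koszul chains of a monomial ideal `L` form a finite
dimensional complex `C(L)`, and since every chain is a monomial times a scalar in each
coordinate, `C(J + K) = C(J) + C(K)` and `C(J ∩ K) = C(J) ∩ C(K)`. The resulting Mayer–Vietoris
sequence splits the Betti numbers as claimed as soon as every cycle of `C(J ∩ K)` is a boundary
both in `C(J)` and in `C(K)`. For `J` this holds in homological degree `l` for the following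
reason: if `|j| ≠ d_J + l` then `J` has no homology there, and if `|j| = d_J + l` then a chain
of `J ∩ K` would involve a monomial of degree `d_J` in `J ∩ K`, that is a minimal generator of
`J` lying in `K`, which contradicts `G(J + K) = G(J) ⊔ G(K)`.
-/

section HomologyRank

variable {F V W : Type*} [Field F] [AddCommGroup V] [Module F V] [AddCommGroup W] [Module F W]

open Module

theorem Submodule.finrank_map_add_finrank_inf_ker (f : V →ₗ[F] W) (N : Submodule F V)
    [FiniteDimensional F N] :
    finrank F (N.map f) + finrank F ↥(N ⊓ LinearMap.ker f) = finrank F N := by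
  rw [← (f.domRestrict N).finrank_range_add_finrank_ker, LinearMap.range_domRestrict,
    LinearMap.ker_domRestrict, ← Submodule.map_comap_subtype,
    ← (Submodule.equivSubtypeMap N _).finrank_eq]

theorem Submodule.finrank_sup_inf_ker_add_finrank_inf (f : V →ₗ[F] W) (P Q : Submodule F V)
    [FiniteDimensional F P] [FiniteDimensional F Q] :
    finrank F ↥((P ⊔ Q) ⊓ LinearMap.ker f) + finrank F ↥(P ⊓ Q) =
      finrank F ↥(P.map f ⊓ Q.map f) + finrank F ↥(P ⊓ LinearMap.ker f) +
        finrank F ↥(Q ⊓ LinearMap.ker f) := by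
  have hP := P.finrank_map_add_finrank_inf_ker f
  have hQ := Q.finrank_map_add_finrank_inf_ker f
  have hPQ := (P ⊔ Q).finrank_map_add_finrank_inf_ker f
  rw [Submodule.map_sup] at hPQ
  have hV := Submodule.finrank_sup_add_finrank_inf_eq P Q
  have hW := Submodule.finrank_sup_add_finrank_inf_eq (P.map f) (Q.map f)
  omega

/-- A complex `⋯ → C 1 → C 0` is encoded as a family of subspaces of one space `V`, mapped
into each other by a single `d` with `d ∘ d = 0`. -/
noncomputable def homologyRank (d : V →ₗ[F] V) (C : ℕ → Submodule F V) (l : ℕ) : ℕ :=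
  finrank F (↥(C l ⊓ LinearMap.ker d) ⧸
    ((C (l + 1)).map d).comap (C l ⊓ LinearMap.ker d).subtype)

variable {d : V →ₗ[F] V} {C : ℕ → Submodule F V}

theorem map_le_inf_ker (hd : ∀ v, d (d v) = 0) (hC : ∀ l, (C (l + 1)).map d ≤ C l) (l : ℕ) :
    (C (l + 1)).map d ≤ C l ⊓ LinearMap.ker d := by
  rintro _ ⟨v, hv, rfl⟩
  exact ⟨hC l ⟨v, hv, rfl⟩, hd v⟩

theorem homologyRank_add_finrank_map (hd : ∀ v, d (d v) = 0)
    (hC : ∀ l, (C (l + 1)).map d ≤ C l) (l : ℕ) [FiniteDimensional F (C l)] :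
    homologyRank d C l + finrank F ((C (l + 1)).map d) = finrank F ↥(C l ⊓ LinearMap.ker d) := by
  rw [homologyRank, ← (Submodule.comapSubtypeEquivOfLe (map_le_inf_ker hd hC l)).finrank_eq]
  exact Submodule.finrank_quotient_add_finrank _

theorem inf_ker_le_map_of_homologyRank_eq_zero (l : ℕ) [FiniteDimensional F (C l)]
    (h : homologyRank d C l = 0) : C l ⊓ LinearMap.ker d ≤ (C (l + 1)).map d := by
  intro v hv
  have htop := Submodule.Quotient.subsingleton_iff.1 (finrank_zero_iff.1 h)
  exact (htop ▸ Submodule.mem_top : (⟨v, hv⟩ : ↥(C l ⊓ LinearMap.ker d)) ∈ _)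

theorem homologyRank_sup (hd : ∀ v, d (d v) = 0) {P Q : ℕ → Submodule F V}
    [∀ l, FiniteDimensional F (P l)] [∀ l, FiniteDimensional F (Q l)]
    (hP : ∀ l, (P (l + 1)).map d ≤ P l) (hQ : ∀ l, (Q (l + 1)).map d ≤ Q l)
    (hP₀ : P 0 ≤ LinearMap.ker d)
    (hPQ : ∀ l, P l ⊓ Q l ⊓ LinearMap.ker d ≤ (P (l + 1)).map d ⊓ (Q (l + 1)).map d) (l : ℕ) :
    homologyRank d (P ⊔ Q) l = homologyRank d P l + homologyRank d Q l +
      if l = 0 then 0 else homologyRank d (P ⊓ Q) (l - 1) := by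
  have : ∀ l, FiniteDimensional F ((P ⊔ Q) l) := fun l => Submodule.finiteDimensional_sup _ _
  have : ∀ l, FiniteDimensional F ((P ⊓ Q) l) := fun l => Submodule.finiteDimensional_inf_left _ _
  have hPQ_eq : ∀ l, (P (l + 1)).map d ⊓ (Q (l + 1)).map d = P l ⊓ Q l ⊓ LinearMap.ker d :=
    fun l => le_antisymm
      (le_inf (inf_le_inf ((map_le_inf_ker hd hP l).trans inf_le_left)
        ((map_le_inf_ker hd hQ l).trans inf_le_left))
        (inf_le_left.trans ((map_le_inf_ker hd hP l).trans inf_le_right)))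
      (hPQ l)
  have hconn : finrank F ↥((P l).map d ⊓ (Q l).map d) =
      finrank F ((P l ⊓ Q l).map d) + if l = 0 then 0 else homologyRank d (P ⊓ Q) (l - 1) := by
    cases l with
    | zero =>
      have hP₀' : (P 0).map d = ⊥ := by
        rwa [eq_bot_iff, Submodule.map_le_iff_le_comap, Submodule.comap_bot]
      have h₀ : (P 0 ⊓ Q 0).map d = ⊥ := eq_bot_iff.2 (hP₀' ▸ Submodule.map_mono inf_le_left)
      rw [hP₀', h₀, bot_inf_eq]
      simp
    | succ l =>
      have h := homologyRank_add_finrank_map hd (C := P ⊓ Q)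
        (fun l => (Submodule.map_inf_le d).trans (inf_le_inf (hP l) (hQ l))) l
      rw [hPQ_eq l]
      simp only [Pi.inf_apply] at h
      simp only [add_tsub_cancel_right, if_neg l.succ_ne_zero]
      omega
  have hsup := homologyRank_add_finrank_map hd (C := P ⊔ Q)
    (fun l => (Submodule.map_sup _ _ d).trans_le (sup_le_sup (hP l) (hQ l))) l
  have hsupB : finrank F (((P ⊔ Q) (l + 1)).map d) =
      finrank F ↥((P (l + 1)).map d ⊔ (Q (l + 1)).map d) :=
    (LinearEquiv.ofEq _ _ (Submodule.map_sup (P (l + 1)) (Q (l + 1)) d)).finrank_eq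
  have hsupZ : finrank F ↥((P ⊔ Q) l ⊓ LinearMap.ker d) =
      finrank F ↥((P l ⊔ Q l) ⊓ LinearMap.ker d) := rfl
  have hPl := homologyRank_add_finrank_map hd hP l
  have hQl := homologyRank_add_finrank_map hd hQ l
  have hB := Submodule.finrank_sup_add_finrank_inf_eq ((P (l + 1)).map d) ((Q (l + 1)).map d)
  rw [hPQ_eq l] at hB
  have hZ := Submodule.finrank_sup_inf_ker_add_finrank_inf d (P l) (Q l)
  have hN := Submodule.finrank_map_add_finrank_inf_ker d (P l ⊓ Q l)
  omega

end HomologyRank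

theorem Finsupp.eq_of_le_of_degree_eq {ι : Type*} {g m : ι →₀ ℕ} (hle : g ≤ m)
    (h : g.degree = m.degree) : g = m := by
  obtain ⟨e, rfl⟩ := exists_add_of_le hle
  rw [map_add, left_eq_add, Finsupp.degree_eq_zero_iff] at h
  rw [h, add_zero]

section MonomialIdeal

variable {k : Type*} [Field k] {σ : Type*}

theorem IsMonomialIdeal.mem_iff {L : Ideal (MvPolynomial σ k)} (hL : IsMonomialIdeal k σ L)
    {f : MvPolynomial σ k} : f ∈ L ↔ ∀ m ∈ f.support, monomial m (1 : k) ∈ L := by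
  classical
  obtain ⟨S, rfl⟩ := hL
  simp only [mem_ideal_span_monomial_image, support_monomial, if_neg one_ne_zero,
    Finset.mem_singleton, forall_eq]

theorem IsMonomialIdeal.mem_or_mem_of_mem_sup {J K : Ideal (MvPolynomial σ k)}
    (hJ : IsMonomialIdeal k σ J) (hK : IsMonomialIdeal k σ K) {f : MvPolynomial σ k}
    (hf : f ∈ J ⊔ K) {m : σ →₀ ℕ} (hfm : ∀ m' ∈ f.support, m' = m) : f ∈ J ∨ f ∈ K := by
  obtain ⟨SJ, rfl⟩ := hJ
  obtain ⟨SK, rfl⟩ := hK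
  rw [← Ideal.span_union, ← Set.image_union, mem_ideal_span_monomial_image] at hf
  simp only [mem_ideal_span_monomial_image]
  by_cases hm : m ∈ f.support
  · obtain ⟨s, hs | hs, hsm⟩ := hf m hm
    · exact .inl fun m' hm' => ⟨s, hs, hfm m' hm' ▸ hsm⟩
    · exact .inr fun m' hm' => ⟨s, hs, hfm m' hm' ▸ hsm⟩
  · exact .inl fun m' hm' => absurd (hfm m' hm' ▸ hm') hm

theorem exists_mem_minGens_le (L : Ideal (MvPolynomial σ k)) {m : σ →₀ ℕ}
    (hm : monomial m (1 : k) ∈ L) : ∃ g ∈ minGens k σ L, g ≤ m := by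
  obtain ⟨g, ⟨hgL, hgm⟩, hmin⟩ := wellFounded_lt.has_min {g | monomial g (1 : k) ∈ L ∧ g ≤ m}
    ⟨m, hm, le_rfl⟩
  exact ⟨g, ⟨hgL, fun g' hle hne hg'L =>
    hmin g' ⟨hg'L, hle.trans hgm⟩ (lt_of_le_of_ne hle hne)⟩, hgm⟩

theorem mem_minGens_of_degree_eq {L : Ideal (MvPolynomial σ k)} {d : ℕ}
    (hL : ∀ g ∈ minGens k σ L, g.degree = d) {m : σ →₀ ℕ} (hm : monomial m (1 : k) ∈ L)
    (hmd : m.degree = d) : m ∈ minGens k σ L := by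
  obtain ⟨g, hg, hgm⟩ := exists_mem_minGens_le L hm
  rwa [← Finsupp.eq_of_le_of_degree_eq hgm (by rw [hL g hg, hmd])]

theorem monomial_notMem_of_mem_minGens {L L' : Ideal (MvPolynomial σ k)} (hLL' : L ≤ L')
    {m : σ →₀ ℕ} (hm : m ∈ minGens k σ L') (hmL : m ∉ minGens k σ L) :
    monomial m (1 : k) ∉ L := by
  intro hmL'
  obtain ⟨g, hg, hgm⟩ := exists_mem_minGens_le L hmL'
  exact hm.2 g hgm (fun h => hmL (h ▸ hg)) (hLL' hg.1)

end MonomialIdeal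

section KoszulChains

variable {k : Type*} [Field k] {σ : Type*} [DecidableEq σ]

theorem kChain_mono {L L' : Ideal (MvPolynomial σ k)} (h : L ≤ L') (i : ℕ) (j : σ →₀ ℕ) :
    kChain k σ L i j ≤ kChain k σ L' i j :=
  fun _ hc S => ⟨(hc S).1, h (hc S).2.1, (hc S).2.2⟩

theorem kChain_inf (J K : Ideal (MvPolynomial σ k)) (i : ℕ) (j : σ →₀ ℕ) :
    kChain k σ (J ⊓ K) i j = kChain k σ J i j ⊓ kChain k σ K i j :=
  le_antisymm (le_inf (kChain_mono inf_le_left i j) (kChain_mono inf_le_right i j))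
    fun _ ⟨hcJ, hcK⟩ S => ⟨(hcJ S).1, ⟨(hcJ S).2.1, (hcK S).2.1⟩, (hcJ S).2.2⟩

variable {L : Ideal (MvPolynomial σ k)} {i : ℕ} {j : σ →₀ ℕ} {c : Finset σ → MvPolynomial σ k}

theorem eq_of_mem_support_of_mem_kChain (hc : c ∈ kChain k σ L i j) {S : Finset σ}
    {m : σ →₀ ℕ} (hm : m ∈ (c S).support) : m = j - ∑ t ∈ S, Finsupp.single t 1 :=
  eq_tsub_of_add_eq ((hc S).2.2 m hm)

theorem degree_add_card_of_mem_support_of_mem_kChain (hc : c ∈ kChain k σ L i j)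
    {S : Finset σ} (hS : S.card = i) {m : σ →₀ ℕ} (hm : m ∈ (c S).support) :
    m.degree + i = j.degree := by
  rw [← (hc S).2.2 m hm, map_add, map_sum]
  simp [hS]

theorem ite_mem_kChain {L' : Ideal (MvPolynomial σ k)} (hc : c ∈ kChain k σ L' i j)
    (p : Finset σ → Prop) [DecidablePred p] (hp : ∀ S, p S → c S ∈ L) :
    (fun S => if p S then c S else 0) ∈ kChain k σ L i j := by
  intro S
  by_cases h : p S
  · simp only [if_pos h]
    exact ⟨(hc S).1, hp S h, (hc S).2.2⟩
  · simp [h, L.zero_mem]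

theorem kChain_sup {J K : Ideal (MvPolynomial σ k)} (hJ : IsMonomialIdeal k σ J)
    (hK : IsMonomialIdeal k σ K) (i : ℕ) (j : σ →₀ ℕ) :
    kChain k σ (J ⊔ K) i j = kChain k σ J i j ⊔ kChain k σ K i j := by
  classical
  refine le_antisymm (fun c hc => ?_)
    (sup_le (kChain_mono le_sup_left i j) (kChain_mono le_sup_right i j))
  have hcK : ∀ S, c S ∉ J → c S ∈ K := fun S hS =>
    (hJ.mem_or_mem_of_mem_sup hK (hc S).2.1
      fun _ hm => eq_of_mem_support_of_mem_kChain hc hm).resolve_left hS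
  refine Submodule.mem_sup.2 ⟨_, ite_mem_kChain hc (fun S => c S ∈ J) fun _ h => h,
    _, ite_mem_kChain hc (fun S => c S ∉ J) hcK, funext fun S => ?_⟩
  by_cases h : c S ∈ J <;> simp [h]

theorem kChain_inf_eq_bot {J K : Ideal (MvPolynomial σ k)} (hJ : IsMonomialIdeal k σ J)
    (hK : IsMonomialIdeal k σ K) (hJJK : minGens k σ J ⊆ minGens k σ (J ⊔ K))
    (hdisj : Disjoint (minGens k σ J) (minGens k σ K)) {d : ℕ}
    (hd : ∀ g ∈ minGens k σ J, g.degree = d) {l : ℕ} (hj : j.degree = d + l) :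
    kChain k σ (J ⊓ K) l j = ⊥ := by
  refine eq_bot_iff.2 fun c hc => (Submodule.mem_bot k).2 (funext fun S => ?_)
  by_cases hS : S.card = l
  · by_contra hne
    obtain ⟨m, hm⟩ := support_nonempty.2 hne
    have hmJ : m ∈ minGens k σ J := mem_minGens_of_degree_eq hd (hJ.mem_iff.1 (hc S).2.1.1 m hm)
      (by have := degree_add_card_of_mem_support_of_mem_kChain hc hS hm; omega)
    exact monomial_notMem_of_mem_minGens le_sup_right (hJJK hmJ)
      (Set.disjoint_left.1 hdisj hmJ) (hK.mem_iff.1 (hc S).2.1.2 m hm)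
  · exact (hc S).1 hS

instance kChain.finiteDimensional [Fintype σ] (L : Ideal (MvPolynomial σ k)) (i : ℕ)
    (j : σ →₀ ℕ) :
    FiniteDimensional k (kChain k σ L i j) := by
  let coeffs : (Finset σ → MvPolynomial σ k) →ₗ[k] (Finset σ → k) :=
    LinearMap.pi fun S => (lcoeff k (j - ∑ t ∈ S, Finsupp.single t 1)).comp (LinearMap.proj S)
  refine FiniteDimensional.of_injective (coeffs ∘ₗ (kChain k σ L i j).subtype) fun c c' h => ?_
  refine Subtype.ext (funext fun S => MvPolynomial.ext _ _ fun m => ?_)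
  by_cases hm : m = j - ∑ t ∈ S, Finsupp.single t 1
  · exact hm ▸ congrFun h S
  · rw [notMem_support_iff.1 fun h => hm (eq_of_mem_support_of_mem_kChain c.2 h),
      notMem_support_iff.1 fun h => hm (eq_of_mem_support_of_mem_kChain c'.2 h)]

end KoszulChains

/-- The sign rule `e_u ∧ e_t = - e_t ∧ e_u` of the exterior algebra. -/
theorem neg_one_pow_card_filter_insert_mul {R σ : Type*} [CommRing R] [DecidableEq σ]
    [LinearOrder σ] {S : Finset σ} {t u : σ}
    (ht : t ∉ S) (hu : u ∉ S) (htu : t ≠ u) :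
    (-1 : R) ^ (S.filter (· < t)).card * (-1) ^ ((insert t S).filter (· < u)).card =
      -((-1) ^ (S.filter (· < u)).card * (-1) ^ ((insert u S).filter (· < t)).card) := by
  rw [Finset.filter_insert, Finset.filter_insert]
  rcases htu.lt_or_gt with h | h
  · rw [if_pos h, if_neg h.not_gt, Finset.card_insert_of_notMem (by simp [ht])]
    ring
  · rw [if_neg h.not_gt, if_pos h, Finset.card_insert_of_notMem (by simp [hu])]
    ring

section Koszul

variable {k : Type*} [Field k] {σ : Type*} [Fintype σ] [DecidableEq σ] [LinearOrder σ]

theorem koszulD_apply (c : Finset σ → MvPolynomial σ k) (S : Finset σ) :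
    koszulD k σ c S = ∑ t ∈ Sᶜ,
      (-1 : MvPolynomial σ k) ^ (S.filter (· < t)).card * (X t * c (insert t S)) := rfl

theorem koszulD_koszulD (c : Finset σ → MvPolynomial σ k) :
    koszulD k σ (koszulD k σ c) = 0 := by
  funext S
  simp only [koszulD_apply, Finset.mul_sum, Pi.zero_apply]
  rw [Finset.sum_sigma']
  refine Finset.sum_involution (fun p _ => ⟨p.2, p.1⟩) (fun ⟨t, u⟩ hp => ?_)
    (fun ⟨t, u⟩ hp _ h => ?_) (fun ⟨t, u⟩ hp => ?_) fun _ _ => rfl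
  all_goals simp only [Finset.mem_sigma, Finset.mem_compl, Finset.mem_insert, not_or] at hp ⊢
  · have hsign := neg_one_pow_card_filter_insert_mul (R := MvPolynomial σ k) hp.1 hp.2.2
      (Ne.symm hp.2.1)
    rw [Finset.insert_comm, ← neg_eq_iff_add_eq_zero]
    linear_combination (-(X t * X u * c (insert t (insert u S)))) * hsign
  · exact hp.2.1 (congrArg Sigma.fst h)
  · exact ⟨hp.2.2, Ne.symm hp.2.1, hp.1⟩

theorem kChain_zero_le_ker (L : Ideal (MvPolynomial σ k)) (j : σ →₀ ℕ) :
    kChain k σ L 0 j ≤ LinearMap.ker (koszulD k σ) := fun c hc =>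
  funext fun S => Finset.sum_eq_zero fun t ht => by
    rw [(hc (insert t S)).1 (Finset.card_ne_zero_of_mem (Finset.mem_insert_self t S)),
      mul_zero, mul_zero]

theorem map_koszulD_kChain_le (L : Ideal (MvPolynomial σ k)) (i : ℕ) (j : σ →₀ ℕ) :
    (kChain k σ L (i + 1) j).map (koszulD k σ) ≤ kChain k σ L i j := by
  rintro _ ⟨c, hc, rfl⟩ S
  rw [koszulD_apply]
  refine ⟨fun hS => Finset.sum_eq_zero fun t ht => ?_,
    Ideal.sum_mem _ fun t _ => L.mul_mem_left _ (L.mul_mem_left _ (hc _).2.1), fun m hm => ?_⟩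
  · rw [(hc _).1 (by rw [Finset.card_insert_of_notMem (Finset.mem_compl.1 ht)]; omega),
      mul_zero, mul_zero]
  · obtain ⟨t, ht, hmt⟩ := Finset.mem_biUnion.1 (support_sum hm)
    have hsign : (-1 : MvPolynomial σ k) ^ (S.filter (· < t)).card =
        C ((-1) ^ (S.filter (· < t)).card) := by simp
    rw [hsign, ← smul_eq_C_mul] at hmt
    obtain ⟨a, ha, b, hb, rfl⟩ := Finset.mem_add.1 (support_mul _ _ (support_smul hmt))
    rw [support_X, Finset.mem_singleton] at ha
    rw [← (hc _).2.2 b hb, Finset.sum_insert (Finset.mem_compl.1 ht), ha]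
    abel

theorem bettiNumber_eq_homologyRank (L : Ideal (MvPolynomial σ k)) (i : ℕ) (j : σ →₀ ℕ) :
    bettiNumber k σ L i j = homologyRank (koszulD k σ) (kChain k σ L · j) i := rfl

theorem bettiNumberGr_eq_sum (L : Ideal (MvPolynomial σ k)) (i q : ℕ) :
    bettiNumberGr k σ L i q =
      ∑ j ∈ (Finsupp.finite_of_degree_eq q).toFinset, bettiNumber k σ L i j := by
  rw [bettiNumberGr, ← finsum_mem_coe_finset, Set.Finite.coe_toFinset]
  rfl

theorem bettiNumber_eq_zero_of_bettiNumberGr_eq_zero {L : Ideal (MvPolynomial σ k)} {i : ℕ}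
    {j : σ →₀ ℕ} (h : bettiNumberGr k σ L i j.degree = 0) : bettiNumber k σ L i j = 0 := by
  rw [bettiNumberGr_eq_sum, Finset.sum_eq_zero_iff] at h
  exact h j (by simp)

theorem inf_ker_le_map_kChain {J K : Ideal (MvPolynomial σ k)} (hJ : IsMonomialIdeal k σ J)
    (hK : IsMonomialIdeal k σ K) (hJJK : minGens k σ J ⊆ minGens k σ (J ⊔ K))
    (hdisj : Disjoint (minGens k σ J) (minGens k σ K)) (hlin : HasLinearResolution k σ J)
    (l : ℕ) (j : σ →₀ ℕ) :
    kChain k σ (J ⊓ K) l j ⊓ LinearMap.ker (koszulD k σ) ≤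
      (kChain k σ J (l + 1) j).map (koszulD k σ) := by
  obtain ⟨d, hd, hβ⟩ := hlin
  by_cases hj : j.degree = d + l
  · rw [kChain_inf_eq_bot hJ hK hJJK hdisj hd hj, bot_inf_eq]
    exact bot_le
  · exact (inf_le_inf_right _ (kChain_mono inf_le_left l j)).trans
      (inf_ker_le_map_of_homologyRank_eq_zero (C := (kChain k σ J · j)) l
        (bettiNumber_eq_zero_of_bettiNumberGr_eq_zero (hβ l _ hj)))

theorem bettiNumber_sup {J K : Ideal (MvPolynomial σ k)} (hJ : IsMonomialIdeal k σ J)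
    (hK : IsMonomialIdeal k σ K)
    (hgens : minGens k σ (J ⊔ K) = minGens k σ J ∪ minGens k σ K)
    (hdisj : Disjoint (minGens k σ J) (minGens k σ K)) (hlinJ : HasLinearResolution k σ J)
    (hlinK : HasLinearResolution k σ K) (i : ℕ) (j : σ →₀ ℕ) :
    bettiNumber k σ (J ⊔ K) i j = bettiNumber k σ J i j + bettiNumber k σ K i j +
      if i = 0 then 0 else bettiNumber k σ (J ⊓ K) (i - 1) j := by
  have hsup : (kChain k σ (J ⊔ K) · j) = (kChain k σ J · j) ⊔ (kChain k σ K · j) :=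
    funext fun l => kChain_sup hJ hK l j
  have hinf : (kChain k σ (J ⊓ K) · j) = (kChain k σ J · j) ⊓ (kChain k σ K · j) :=
    funext fun l => kChain_inf J K l j
  simp only [bettiNumber_eq_homologyRank, hsup, hinf]
  refine homologyRank_sup (d := koszulD k σ) (P := (kChain k σ J · j)) (Q := (kChain k σ K · j))
    koszulD_koszulD (map_koszulD_kChain_le J · j)
    (map_koszulD_kChain_le K · j) (kChain_zero_le_ker J j) (fun l => ?_) i
  rw [← kChain_inf]
  refine le_inf (inf_ker_le_map_kChain hJ hK (hgens ▸ Set.subset_union_left) hdisj hlinJ l j) ?_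
  rw [inf_comm J K]
  exact inf_ker_le_map_kChain hK hJ (by rw [sup_comm, hgens]; exact Set.subset_union_right)
    hdisj.symm hlinK l j

end Koszul

theorem betti_splitting_of_linear_resolutions_general
    {k : Type*} [Field k] {n : ℕ}
    (I J K : Ideal (MvPolynomial (Fin n) k))
    (hJ : IsMonomialIdeal k (Fin n) J)
    (hK : IsMonomialIdeal k (Fin n) K)
    (hsum : I = J + K)
    (hgens : minGens k (Fin n) I = minGens k (Fin n) J ∪ minGens k (Fin n) K)
    (hdisj : Disjoint (minGens k (Fin n) J) (minGens k (Fin n) K))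
    (hlinJ : HasLinearResolution k (Fin n) J)
    (hlinK : HasLinearResolution k (Fin n) K) :
    ∀ (i j : ℕ),
      bettiNumberGr k (Fin n) I i j =
        bettiNumberGr k (Fin n) J i j + bettiNumberGr k (Fin n) K i j +
          (if i = 0 then 0 else bettiNumberGr k (Fin n) (J ⊓ K) (i - 1) j) := by
  subst hsum
  intro i q
  simp only [bettiNumberGr_eq_sum, Submodule.add_eq_sup,
    bettiNumber_sup hJ hK hgens hdisj hlinJ hlinK, Finset.sum_add_distrib]
  split_ifs <;> simp

/-- if `G(I)` is the disjoint union of `G(J)` and `G(K)` and both `J` and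
`K` have linear minimal free resolutions, then `I = J + K` is a Betti splitting. -/
theorem betti_splitting_of_linear_resolutions
    {k : Type*} [Field k] {n : ℕ}
    (I J K : Ideal (MvPolynomial (Fin n) k))
    (hI : IsMonomialIdeal k (Fin n) I) (hJ : IsMonomialIdeal k (Fin n) J)
    (hK : IsMonomialIdeal k (Fin n) K)
    (hsum : I = J + K)
    (hgens : minGens k (Fin n) I = minGens k (Fin n) J ∪ minGens k (Fin n) K)
    (hdisj : Disjoint (minGens k (Fin n) J) (minGens k (Fin n) K))
    (hlinJ : HasLinearResolution k (Fin n) J)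
    (hlinK : HasLinearResolution k (Fin n) K) :
    ∀ (i j : ℕ),
      bettiNumberGr k (Fin n) I i j =
        bettiNumberGr k (Fin n) J i j + bettiNumberGr k (Fin n) K i j +
          (if i = 0 then 0 else bettiNumberGr k (Fin n) (J ⊓ K) (i - 1) j) :=
  betti_splitting_of_linear_resolutions_general I J K hJ hK hsum hgens hdisj hlinJ hlinK
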